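/- Let f : [0,∞) → (0,∞) be a nondecreasing function such that limsup_{r→∞} (1/r) log f(r) = 0 (subexponential growth). Then for every a > 0, ε > 0 and d > 0, there exists b > a with b - a ≥ d such that (f(b+1) - f(b)) / (f(b) - f(a)) < ε (here we assume f(b) > f(a)). -/
import Mathlib


open Filter Set

/-- Subexponential growth lemma: if a nondecreasing positive function `f` on `[0,∞)`
(tending to infinity, playing the role of the cumulative volume of a measure of infinite mass)
has subexponential growth, then far away one can find `b` where the unit increment
`f(b+1) - f(b)` is small compared with `f(b) - f(a)`. -/
theorem stmt0 (f : ℝ → ℝ)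
    (hmono : ∀ x y, 0 ≤ x → x ≤ y → f x ≤ f y)
    (hpos : ∀ x, 0 ≤ x → 0 < f x)
    (hinf : Tendsto f atTop atTop)
    (hsub : Filter.limsup (fun r => ((Real.log (f r) / r : ℝ) : EReal)) atTop = (0 : EReal)) :
    ∀ a > (0:ℝ), ∀ ε > (0:ℝ), ∀ d > (0:ℝ),
      ∃ b, a < b ∧ d ≤ b - a ∧ f a < f b ∧ (f (b + 1) - f b) / (f b - f a) < ε := by
  intro a ha ε hε d hd
  by_contra hcon
  push_neg at hcon
  -- hcon : ∀ b, a < b → d ≤ b - a → f a < f b → ε ≤ (f (b+1) - f b) / (f b - f a)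
  obtain ⟨B, hB⟩ := eventually_atTop.mp (hinf.eventually_ge_atTop (f a + 1))
  set b₀ : ℝ := max (a + d) B with hb₀def
  have hb₀d : a + d ≤ b₀ := le_max_left _ _
  have hb₀B : B ≤ b₀ := le_max_right _ _
  have hb₀pos : 0 < b₀ := lt_of_lt_of_le (by linarith) hb₀d
  set c : ℝ := f b₀ - f a with hcdef
  have hc1 : 1 ≤ c := by have := hB b₀ hb₀B; simp only [hcdef]; linarith
  have hcpos : 0 < c := by linarith
  have hstep : ∀ b, a + d ≤ b → f a < f b →
      f a < f (b + 1) ∧ (1 + ε) * (f b - f a) ≤ f (b + 1) - f a := by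
    intro b hb hfb
    have hab : a < b := lt_of_lt_of_le (by linarith) hb
    have hbd : d ≤ b - a := by linarith
    have key := hcon b hab hbd hfb
    have hden : 0 < f b - f a := by linarith
    have h1 : ε * (f b - f a) ≤ f (b + 1) - f b := (le_div_iff₀ hden).mp key
    have hεd : 0 < ε * (f b - f a) := mul_pos hε hden
    constructor
    · nlinarith
    · nlinarith
  have hgeom : ∀ n : ℕ, f a < f (b₀ + n) ∧ (1 + ε) ^ n * c ≤ f (b₀ + n) - f a := by
    intro n
    induction n with
    | zero =>
      simp only [Nat.cast_zero, add_zero, pow_zero, one_mul]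
      exact ⟨by have := hB b₀ hb₀B; linarith, le_refl c⟩
    | succ n ih =>
      have hb : a + d ≤ b₀ + n := by
        have : (0:ℝ) ≤ n := n.cast_nonneg
        linarith
      obtain ⟨h1, h2⟩ := hstep (b₀ + n) hb ih.1
      have hcast : b₀ + ((n : ℝ) + 1) = b₀ + n + 1 := by ring
      push_cast
      rw [hcast]
      refine ⟨h1, ?_⟩
      have hmul : (1 + ε) * ((1 + ε) ^ n * c) ≤ (1 + ε) * (f (b₀ + n) - f a) :=
        mul_le_mul_of_nonneg_left ih.2 (by linarith)
      calc (1 + ε) ^ (n + 1) * c = (1 + ε) * ((1 + ε) ^ n * c) := by ring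
        _ ≤ (1 + ε) * (f (b₀ + n) - f a) := hmul
        _ ≤ f (b₀ + n + 1) - f a := h2
  -- now derive exponential growth contradiction
  set L : ℝ := Real.log (1 + ε) with hLdef
  have hL : 0 < L := Real.log_pos (by linarith)
  set L' : ℝ := L / 2 with hL'def
  have hL' : 0 < L' := by positivity
  have hev : ∀ᶠ r in atTop, ((Real.log (f r) / r : ℝ) : EReal) < (L' : EReal) := by
    apply Filter.eventually_lt_of_limsup_lt
    · rw [hsub]; exact_mod_cast hL'
    · exact Filter.isBoundedUnder_of ⟨⊤, fun x => le_top⟩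
  obtain ⟨R, hR⟩ := eventually_atTop.mp hev
  set n : ℕ := ⌈max b₀ R⌉₊ with hndef
  have hnb₀ : b₀ ≤ n := le_trans (le_max_left _ _) (Nat.le_ceil _)
  have hnR : R ≤ n := le_trans (le_max_right _ _) (Nat.le_ceil _)
  set r : ℝ := b₀ + n with hrdef
  have hrpos : 0 < r := by
    have : (0:ℝ) ≤ n := n.cast_nonneg
    linarith
  have hrR : R ≤ r := by linarith
  have hfr := hgeom n
  have hfa : 0 < f a := hpos a ha.le
  have hfrlb : (1 + ε) ^ n * c ≤ f r := by have := hfr.2; linarith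
  have hebpos : 0 < (1 + ε) ^ n * c := by positivity
  have hlog1 : Real.log ((1 + ε) ^ n * c) ≤ Real.log (f r) :=
    Real.log_le_log hebpos hfrlb
  have hlog2 : Real.log ((1 + ε) ^ n * c) = n * L + Real.log c := by
    rw [Real.log_mul (by positivity) (by positivity), Real.log_pow]
  have hlogc : 0 ≤ Real.log c := Real.log_nonneg hc1
  have hkey : L' * r ≤ Real.log (f r) := by
    have h1 : L' * r ≤ (n : ℝ) * L := by
      have : L' * r = (L / 2) * (b₀ + n) := by rw [hL'def, hrdef]
      nlinarith [Nat.cast_nonneg (α := ℝ) n]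
    linarith [hlog1, hlog2.symm.le]
  have hlt := hR r hrR
  rw [EReal.coe_lt_coe_iff] at hlt
  have : L' ≤ Real.log (f r) / r := (le_div_iff₀ hrpos).mpr hkey
  linarith
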